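/- arXiv:2310.12927 — 8 statements merged into one kernel-verified Lean document; each statement's English description precedes it below -/
import Mathlib

section
/- Let X be a finite nonempty poset, Y a poset, and f, f' : X → Y monotone maps with f(x) ≤ f'(x) for all x ∈ X. Let n be the maximal height of the elements of X and for i ∈ {0,…,n+1} define f_i : X → Y by f_i(x) = f(x) if ht(x) ≤ n−i and f_i(x) = f'(x) if ht(x) > n−i. Then each f_i is monotone and f = f_0 ≤ f_1 ≤ … ≤ f_{n+1} = f', where g ≤ g' means g(x) ≤ g'(x) for all x ∈ X. -/
/-!
Heights strictly increase along `<`: a chain ending at `x` extends by `y > x` to a longer chain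
ending at `y`. Hence `{x | ht x ≤ m}` is a lower set for every `m`, and a map that agrees with `f`
on a lower set and with `f' ≥ f` off it is monotone. As `i` grows the lower set
`{x | ht x ≤ n - i}` shrinks, from all of `X` at `i = 0` to `∅` at `i = n + 1`.
-/

def IsHeightFunction {X : Type*} [Preorder X] (ht : X → ℕ) : Prop :=
  ∀ (x : X) (k : ℕ), (∃ c : Fin (k + 1) → X, StrictMono c ∧ c (Fin.last k) = x) ↔ k ≤ ht x

theorem Fin.strictMono_snoc {α : Type*} [Preorder α] {k : ℕ} {c : Fin (k + 1) → α} {y : α}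
    (hc : StrictMono c) (hy : c (Fin.last k) < y) : StrictMono (Fin.snoc c y : Fin (k + 2) → α) := by
  rw [Fin.strictMono_iff_lt_succ]
  intro i
  induction i using Fin.lastCases with
  | last => simpa only [Fin.snoc_castSucc, Fin.succ_last, Fin.snoc_last] using hy
  | cast j =>
    rw [show j.castSucc.succ = j.succ.castSucc from rfl, Fin.snoc_castSucc, Fin.snoc_castSucc]
    exact hc (Fin.castSucc_lt_succ (i := j))

theorem IsHeightFunction.strictMono {X : Type*} [Preorder X] {ht : X → ℕ}
    (hht : IsHeightFunction ht) : StrictMono ht := by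
  intro x y hxy
  obtain ⟨c, hc, hcx⟩ := (hht x (ht x)).2 le_rfl
  exact (hht y (ht x + 1)).1 ⟨_, Fin.strictMono_snoc hc (hcx.symm ▸ hxy), Fin.snoc_last _ _⟩

protected theorem Monotone.ite {α β : Type*} [Preorder α] [Preorder β] {f g : α → β}
    (hf : Monotone f) (hg : Monotone g) {p : α → Prop} [DecidablePred p]
    (hp : ∀ ⦃x y⦄, x ≤ y → p y → p x) (hfg : ∀ x, f x ≤ g x) :
    Monotone fun x ↦ if p x then f x else g x := by
  intro x y h
  by_cases hy : p y
  · simpa [hp h hy, hy] using hf h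
  by_cases hx : p x
  · simpa [hx, hy] using (hf h).trans (hfg y)
  · simpa [hx, hy] using hg h

theorem stmt3_general {X Y : Type*} [PartialOrder X] [PartialOrder Y]
    (f f' : X → Y) (hf : Monotone f) (hf' : Monotone f') (hle : ∀ x, f x ≤ f' x)
    -- `ht x` is the largest `k` such that there is a strictly ascending chain
    -- `x_0 < … < x_k = x` in `X`
    (ht : X → ℕ)
    (hht : ∀ (x : X) (k : ℕ),
      (∃ c : Fin (k + 1) → X, StrictMono c ∧ c (Fin.last k) = x) ↔ k ≤ ht x)
    -- `n` is the maximal height of the elements of `X`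
    (n : ℕ) (hn : ∀ x, ht x ≤ n)
    -- the interpolating maps `f_i` (for `0 ≤ i ≤ n+1`):
    -- `f_i x = f x` if `ht x ≤ n - i`, and `f_i x = f' x` if `ht x > n - i`
    (F : ℕ → X → Y)
    (hF : ∀ i x, F i x = if (ht x : ℤ) ≤ (n : ℤ) - (i : ℤ) then f x else f' x) :
    (∀ i ≤ n + 1, Monotone (F i)) ∧ F 0 = f ∧ F (n + 1) = f' ∧
      ∀ i ≤ n, ∀ x, F i x ≤ F (i + 1) x := by
  have hF' : ∀ i, F i = fun x ↦ if (ht x : ℤ) ≤ (n : ℤ) - (i : ℤ) then f x else f' x :=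
    fun i ↦ funext (hF i)
  have ht_mono : Monotone ht := (IsHeightFunction.strictMono hht).monotone
  refine ⟨fun i _ ↦ ?_, ?_, ?_, fun i _ x ↦ ?_⟩
  · rw [hF' i]
    exact hf.ite hf' (fun x y hxy hy ↦ le_trans (by exact_mod_cast ht_mono hxy) hy) hle
  · funext x
    rw [hF, if_pos (by have := hn x; push_cast; omega)]
  · funext x
    rw [hF, if_neg (by have := hn x; push_cast; omega)]
  · rw [hF, hF]
    split_ifs <;> first | exact le_rfl | exact hle x | omega

/-- refining a pointwise inequality `f ≤ f'` of monotone maps on a finite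
nonempty poset into a chain `f = f_0 ≤ f_1 ≤ … ≤ f_{n+1} = f'` of monotone maps,
using the height function `ht`. -/
theorem stmt3 {X Y : Type*} [PartialOrder X] [PartialOrder Y] [Fintype X] [Nonempty X]
    (f f' : X → Y) (hf : Monotone f) (hf' : Monotone f') (hle : ∀ x, f x ≤ f' x)
    -- `ht x` is the largest `k` such that there is a strictly ascending chain
    -- `x_0 < … < x_k = x` in `X`
    (ht : X → ℕ)
    (hht : ∀ (x : X) (k : ℕ),
      (∃ c : Fin (k + 1) → X, StrictMono c ∧ c (Fin.last k) = x) ↔ k ≤ ht x)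
    -- `n` is the maximal height of the elements of `X`
    (n : ℕ) (hn : ∀ x, ht x ≤ n) (hmax : ∃ x, ht x = n)
    -- the interpolating maps `f_i` (for `0 ≤ i ≤ n+1`):
    -- `f_i x = f x` if `ht x ≤ n - i`, and `f_i x = f' x` if `ht x > n - i`
    (F : ℕ → X → Y)
    (hF : ∀ i x, F i x = if (ht x : ℤ) ≤ (n : ℤ) - (i : ℤ) then f x else f' x) :
    (∀ i ≤ n + 1, Monotone (F i)) ∧ F 0 = f ∧ F (n + 1) = f' ∧
      ∀ i ≤ n, ∀ x, F i x ≤ F (i + 1) x :=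
  stmt3_general f f' hf hf' hle ht hht n hn F hF
end

section
/- Let (X,l) and (Y,m) be A-monomial posets with X finite and nonempty, and let (f,λ) ≤ (f',λ') be morphisms (X,l) → (Y,m). Let n be the maximal height of elements of X and for i ∈ {0,…,n+1} define f_i(x) = f(x) and λ_i(x) = λ(x) if ht(x) ≤ n−i, and f_i(x) = f'(x) and λ_i(x) = λ'(x) if ht(x) > n−i. Then each pair (f_i,λ_i) is a morphism (X,l) → (Y,m) of A-monomial posets and (f,λ) = (f_0,λ_0) ≤ (f_1,λ_1) ≤ … ≤ (f_{n+1},λ_{n+1}) = (f',λ'). -/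
/-- An `A`-monomial structure on the poset `X`. -/
def IsMonomialPoset {A X : Type*} [Group A] [PartialOrder X] (l : X → X → A) : Prop :=
  (∀ x x' x'' : X, x ≤ x' → x' ≤ x'' → l x' x'' * l x x' = l x x'') ∧ ∀ x : X, l x x = 1

/-- `p = (f, λ)` is a morphism of `A`-monomial posets `(X,l) → (Y,m)`. -/
def IsPHom {A X Y : Type*} [Group A] [PartialOrder X] [PartialOrder Y]
    (l : X → X → A) (m : Y → Y → A) (p : (X → Y) × (X → A)) : Prop :=
  Monotone p.1 ∧ ∀ x x' : X, x ≤ x' → m (p.1 x) (p.1 x') * p.2 x = p.2 x' * l x x'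

/-- The relation `(f,λ) ≤ (f',λ')` on morphisms of `A`-monomial posets. -/
def PLe {A X Y : Type*} [Group A] [PartialOrder X] [PartialOrder Y]
    (m : Y → Y → A) (p q : (X → Y) × (X → A)) : Prop :=
  (∀ x, p.1 x ≤ q.1 x) ∧ ∀ x, m (p.1 x) (q.1 x) * p.2 x = q.2 x

/-!
If `(f,λ) ≤ (f',λ')`, the pair that is `(f,λ)` on a lower set `S` and `(f',λ')` off it is
again a morphism: the only new square, for `x ≤ x'` with `x ∈ S` and `x' ∉ S`, commutes because
`m(f x, f' x') = m(f' x, f' x') · m(f x, f' x)` and `m(f x, f' x) · λ x = λ' x`. Shrinking `S`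
moves the glued morphism up. Height is strictly monotone (a chain ending in `x < x'` extends
by `x'`), so the sets `{x | ht x ≤ n - i}` are lower sets decreasing from `X` to `∅`.
-/

theorem strictMono_of_chain_height {X : Type*} [PartialOrder X] (ht : X → ℕ)
    (hht : ∀ (x : X) (k : ℕ),
      (∃ c : Fin (k + 1) → X, StrictMono c ∧ c (Fin.last k) = x) ↔ k ≤ ht x) :
    StrictMono ht := by
  intro x x' hxx'
  obtain ⟨c, hc, hcx⟩ := (hht x (ht x)).mpr le_rfl
  let p : LTSeries X :=
    (LTSeries.mk (ht x) c hc).snoc x' (show c (Fin.last _) < x' by rwa [hcx])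
  exact (hht x' (ht x + 1)).mp ⟨p, p.strictMono, RelSeries.last_snoc _ _ _⟩

section Piecewise

variable {A X Y : Type*} (s : Set X) [DecidablePred (· ∈ s)] {p q : (X → Y) × (X → A)}

def piecewisePair (p q : (X → Y) × (X → A)) : (X → Y) × (X → A) :=
  (s.piecewise p.1 q.1, s.piecewise p.2 q.2)

theorem piecewisePair_of_forall_mem (h : ∀ x, x ∈ s) : piecewisePair s p q = p :=
  Prod.ext (funext fun x => s.piecewise_eq_of_mem _ _ (h x))
    (funext fun x => s.piecewise_eq_of_mem _ _ (h x))

theorem piecewisePair_of_forall_notMem (h : ∀ x, x ∉ s) : piecewisePair s p q = q :=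
  Prod.ext (funext fun x => s.piecewise_eq_of_notMem _ _ (h x))
    (funext fun x => s.piecewise_eq_of_notMem _ _ (h x))

end Piecewise

section Morphisms

variable {A X Y : Type*} [Group A] [PartialOrder X] [PartialOrder Y]
  {l : X → X → A} {m : Y → Y → A} {p q : (X → Y) × (X → A)}

theorem PLe.refl (hm : IsMonomialPoset m) (p : (X → Y) × (X → A)) : PLe m p p :=
  ⟨fun _ => le_rfl, fun x => by rw [hm.2, one_mul]⟩

theorem PLe.mixed_naturality (hm : IsMonomialPoset m) (hq : IsPHom l m q) (hpq : PLe m p q)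
    {x x' : X} (h : x ≤ x') : m (p.1 x) (q.1 x') * p.2 x = q.2 x' * l x x' :=
  calc m (p.1 x) (q.1 x') * p.2 x
      = m (q.1 x) (q.1 x') * (m (p.1 x) (q.1 x) * p.2 x) := by
        rw [← mul_assoc, hm.1 _ _ _ (hpq.1 x) (hq.1 h)]
    _ = m (q.1 x) (q.1 x') * q.2 x := by rw [hpq.2 x]
    _ = q.2 x' * l x x' := hq.2 x x' h

variable {s t : Set X} [DecidablePred (· ∈ s)] [DecidablePred (· ∈ t)]

theorem IsPHom.piecewisePair (hm : IsMonomialPoset m) (hp : IsPHom l m p) (hq : IsPHom l m q)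
    (hpq : PLe m p q) (hs : IsLowerSet s) : IsPHom l m (piecewisePair s p q) := by
  constructor
  · intro x x' h
    simp only [_root_.piecewisePair, Set.piecewise]
    split_ifs with hx hx' hx'
    · exact hp.1 h
    · exact (hpq.1 x).trans (hq.1 h)
    · exact absurd (hs h hx') hx
    · exact hq.1 h
  · intro x x' h
    simp only [_root_.piecewisePair, Set.piecewise]
    split_ifs with hx hx' hx'
    · exact hp.2 x x' h
    · exact hpq.mixed_naturality hm hq h
    · exact absurd (hs h hx') hx
    · exact hq.2 x x' h

theorem PLe.piecewisePair_of_subset (hm : IsMonomialPoset m) (hpq : PLe m p q) (hts : t ⊆ s) :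
    PLe m (piecewisePair s p q) (piecewisePair t p q) := by
  constructor
  · intro x
    simp only [_root_.piecewisePair, Set.piecewise]
    split_ifs with hxs hxt hxt
    · exact (PLe.refl hm p).1 x
    · exact hpq.1 x
    · exact absurd (hts hxt) hxs
    · exact (PLe.refl hm q).1 x
  · intro x
    simp only [_root_.piecewisePair, Set.piecewise]
    split_ifs with hxs hxt hxt
    · exact (PLe.refl hm p).2 x
    · exact hpq.2 x
    · exact absurd (hts hxt) hxs
    · exact (PLe.refl hm q).2 x

end Morphisms

theorem stmt4_general {A X Y : Type*} [Group A] [PartialOrder X] [PartialOrder Y]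
    (l : X → X → A) (m : Y → Y → A)
    (hm : IsMonomialPoset m)
    (f f' : X → Y) (lam lam' : X → A)
    (hp : IsPHom l m (f, lam)) (hp' : IsPHom l m (f', lam'))
    (hle : PLe m (f, lam) (f', lam'))
    -- `ht x` is the largest `k` such that there is a strictly ascending chain
    -- `x_0 < … < x_k = x` in `X`
    (ht : X → ℕ)
    (hht : ∀ (x : X) (k : ℕ),
      (∃ c : Fin (k + 1) → X, StrictMono c ∧ c (Fin.last k) = x) ↔ k ≤ ht x)
    -- `n` is the maximal height of the elements of `X`
    (n : ℕ) (hn : ∀ x, ht x ≤ n)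
    -- the interpolating data `(f_i, λ_i)` for `0 ≤ i ≤ n+1`
    (F : ℕ → X → Y) (L : ℕ → X → A)
    (hF : ∀ i x, F i x = if (ht x : ℤ) ≤ (n : ℤ) - (i : ℤ) then f x else f' x)
    (hL : ∀ i x, L i x = if (ht x : ℤ) ≤ (n : ℤ) - (i : ℤ) then lam x else lam' x) :
    (∀ i ≤ n + 1, IsPHom l m (F i, L i)) ∧
      (F 0, L 0) = (f, lam) ∧ (F (n + 1), L (n + 1)) = (f', lam') ∧
      ∀ i ≤ n, PLe m (F i, L i) (F (i + 1), L (i + 1)) := by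
  let s : ℕ → Set X := fun i => {x | (ht x : ℤ) ≤ n - i}
  have hFL : ∀ i, (F i, L i) = piecewisePair (s i) (f, lam) (f', lam') := fun i =>
    Prod.ext (funext (hF i)) (funext (hL i))
  have hht_mono := (strictMono_of_chain_height ht hht).monotone
  have hs : ∀ i, IsLowerSet (s i) := fun i x' x h hx =>
    show (ht x : ℤ) ≤ _ from le_trans (by exact_mod_cast hht_mono h) hx
  refine ⟨fun i _ => hFL i ▸ hp.piecewisePair hm hp' hle (hs i), ?_, ?_, fun i _ => ?_⟩
  · exact hFL 0 ▸ piecewisePair_of_forall_mem _ fun x =>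
      show (ht x : ℤ) ≤ n - (0 : ℕ) by have := hn x; omega
  · exact hFL (n + 1) ▸ piecewisePair_of_forall_notMem _ fun x =>
      show ¬(ht x : ℤ) ≤ n - (n + 1 : ℕ) by have := hn x; omega
  · rw [hFL, hFL]
    exact hle.piecewisePair_of_subset hm fun x (hx : (ht x : ℤ) ≤ n - (i + 1 : ℕ)) =>
      show (ht x : ℤ) ≤ n - i by omega

/-- refining `(f,λ) ≤ (f',λ')` in `Hom((X,l),(Y,m))`, for `X` finite and
nonempty, into a chain `(f,λ) = (f_0,λ_0) ≤ … ≤ (f_{n+1},λ_{n+1}) = (f',λ')` of morphisms. -/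
theorem stmt4 {A X Y : Type*} [Group A] [PartialOrder X] [PartialOrder Y]
    [Fintype X] [Nonempty X]
    (l : X → X → A) (m : Y → Y → A)
    (hl : IsMonomialPoset l) (hm : IsMonomialPoset m)
    (f f' : X → Y) (lam lam' : X → A)
    (hp : IsPHom l m (f, lam)) (hp' : IsPHom l m (f', lam'))
    (hle : PLe m (f, lam) (f', lam'))
    -- `ht x` is the largest `k` such that there is a strictly ascending chain
    -- `x_0 < … < x_k = x` in `X`
    (ht : X → ℕ)
    (hht : ∀ (x : X) (k : ℕ),
      (∃ c : Fin (k + 1) → X, StrictMono c ∧ c (Fin.last k) = x) ↔ k ≤ ht x)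
    -- `n` is the maximal height of the elements of `X`
    (n : ℕ) (hn : ∀ x, ht x ≤ n) (hmax : ∃ x, ht x = n)
    -- the interpolating data `(f_i, λ_i)` for `0 ≤ i ≤ n+1`
    (F : ℕ → X → Y) (L : ℕ → X → A)
    (hF : ∀ i x, F i x = if (ht x : ℤ) ≤ (n : ℤ) - (i : ℤ) then f x else f' x)
    (hL : ∀ i x, L i x = if (ht x : ℤ) ≤ (n : ℤ) - (i : ℤ) then lam x else lam' x) :
    (∀ i ≤ n + 1, IsPHom l m (F i, L i)) ∧
      (F 0, L 0) = (f, lam) ∧ (F (n + 1), L (n + 1)) = (f', lam') ∧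
      ∀ i ≤ n, PLe m (F i, L i) (F (i + 1), L (i + 1)) :=
  stmt4_general l m hm f f' lam lam' hp hp' hle ht hht n hn F L hF hL
end

section
/- Let (S,𝒮,l) and (T,𝒯,m) be A-monomial simplicial complexes and let f, f' : (S,𝒮) → (T,𝒯) be contiguous simplicial maps. Then the family ι(σ) := m(f'(σ), f(σ)∪f'(σ))⁻¹·m(f(σ), f(σ)∪f'(σ)) is natural, i.e., for all σ ⊆ σ' in 𝒮 one has m(f'(σ), f'(σ'))·ι(σ) = ι(σ')·m(f(σ), f(σ')). -/
/-! With `U' = f(σ') ∪ f'(σ')`, the cocycle condition gives `m(σ,τ) = m(τ,U')⁻¹ · m(σ,U')`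
for faces below `U'`, and `ι(σ)` may be computed through `U'` instead of `f(σ) ∪ f'(σ)`.
Both sides then collapse to `m(f'(σ'),U')⁻¹ · m(f(σ),U')`. -/
/-- `𝒮` is (the set of simplices of) a simplicial complex on the vertex set `S`. -/
def IsSComplex {S : Type*} (𝒮 : Set (Finset S)) : Prop :=
  (∀ σ ∈ 𝒮, σ.Nonempty) ∧ (∀ s : S, ({s} : Finset S) ∈ 𝒮) ∧
    ∀ σ ∈ 𝒮, ∀ τ : Finset S, τ ⊆ σ → τ.Nonempty → τ ∈ 𝒮

/-- `(S,𝒮,l)` is an `A`-monomial simplicial complex. -/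
def IsMonomialSC {A S : Type*} [Group A]
    (𝒮 : Set (Finset S)) (l : Finset S → Finset S → A) : Prop :=
  IsSComplex 𝒮 ∧
    (∀ σ τ υ : Finset S, σ ∈ 𝒮 → τ ∈ 𝒮 → υ ∈ 𝒮 → σ ⊆ τ → τ ⊆ υ →
      l τ υ * l σ τ = l σ υ) ∧
    ∀ σ ∈ 𝒮, l σ σ = 1

/-- `p = (f,λ)` is a morphism of `A`-monomial simplicial complexes
`(S,𝒮,l) → (T,𝒯,m)`. -/
def IsSHom {A S T : Type*} [Group A] [DecidableEq T]
    (𝒮 : Set (Finset S)) (𝒯 : Set (Finset T))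
    (l : Finset S → Finset S → A) (m : Finset T → Finset T → A)
    (p : (S → T) × (Finset S → A)) : Prop :=
  (∀ σ ∈ 𝒮, σ.image p.1 ∈ 𝒯) ∧
    ∀ σ τ : Finset S, σ ∈ 𝒮 → τ ∈ 𝒮 → σ ⊆ τ →
      m (σ.image p.1) (τ.image p.1) * p.2 σ = p.2 τ * l σ τ

/-- Contiguity `(f,λ) − (f',λ')` of morphisms of `A`-monomial simplicial complexes. -/
def SContig {A S T : Type*} [Group A] [DecidableEq T]
    (𝒮 : Set (Finset S)) (𝒯 : Set (Finset T)) (m : Finset T → Finset T → A)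
    (p q : (S → T) × (Finset S → A)) : Prop :=
  (∀ σ ∈ 𝒮, σ.image p.1 ∪ σ.image q.1 ∈ 𝒯) ∧
    ∀ σ ∈ 𝒮, m (σ.image p.1) (σ.image p.1 ∪ σ.image q.1) * p.2 σ
      = m (σ.image q.1) (σ.image p.1 ∪ σ.image q.1) * q.2 σ

/-- The natural transformation `ι_{f−f',m}` associated to contiguous simplicial maps. -/
def SIota {A S T : Type*} [Group A] [DecidableEq T]
    (m : Finset T → Finset T → A) (f f' : S → T) (σ : Finset S) : A :=
  (m (σ.image f') (σ.image f ∪ σ.image f'))⁻¹ * m (σ.image f) (σ.image f ∪ σ.image f')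

namespace IsMonomialSC

variable {A T : Type*} [Group A] {𝒯 : Set (Finset T)} {m : Finset T → Finset T → A}

theorem eq_inv_mul (hm : IsMonomialSC 𝒯 m) {σ τ υ : Finset T} (hσ : σ ∈ 𝒯) (hτ : τ ∈ 𝒯)
    (hυ : υ ∈ 𝒯) (hστ : σ ⊆ τ) (hτυ : τ ⊆ υ) :
    m σ τ = (m τ υ)⁻¹ * m σ υ := by
  rw [← hm.2.1 σ τ υ hσ hτ hυ hστ hτυ, inv_mul_cancel_left]

theorem inv_mul_eq_of_subset (hm : IsMonomialSC 𝒯 m) {σ τ υ υ' : Finset T} (hσ : σ ∈ 𝒯)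
    (hτ : τ ∈ 𝒯) (hυ : υ ∈ 𝒯) (hυ' : υ' ∈ 𝒯) (hσυ : σ ⊆ υ) (hτυ : τ ⊆ υ) (hυυ' : υ ⊆ υ') :
    (m τ υ)⁻¹ * m σ υ = (m τ υ')⁻¹ * m σ υ' := by
  rw [← hm.2.1 σ υ υ' hσ hυ hυ' hσυ hυυ', ← hm.2.1 τ υ υ' hτ hυ hυ' hτυ hυυ']
  group

end IsMonomialSC

theorem stmt5_general {A S T : Type*} [Group A] [DecidableEq T]
    (𝒮 : Set (Finset S)) (𝒯 : Set (Finset T))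
    (m : Finset T → Finset T → A)
    (hm : IsMonomialSC 𝒯 m)
    (f f' : S → T)
    (hf : ∀ σ ∈ 𝒮, σ.image f ∈ 𝒯) (hf' : ∀ σ ∈ 𝒮, σ.image f' ∈ 𝒯)
    (hc : ∀ σ ∈ 𝒮, σ.image f ∪ σ.image f' ∈ 𝒯) :
    ∀ σ σ' : Finset S, σ ∈ 𝒮 → σ' ∈ 𝒮 → σ ⊆ σ' →
      m (σ.image f') (σ'.image f') * SIota m f f' σ
        = SIota m f f' σ' * m (σ.image f) (σ'.image f) := by
  intro σ σ' hσ hσ' hσσ'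
  have hfσ : σ.image f ⊆ σ'.image f := Finset.image_subset_image hσσ'
  have hf'σ : σ.image f' ⊆ σ'.image f' := Finset.image_subset_image hσσ'
  have hι : SIota m f f' σ
      = (m (σ.image f') (σ'.image f ∪ σ'.image f'))⁻¹ * m (σ.image f) (σ'.image f ∪ σ'.image f') :=
    hm.inv_mul_eq_of_subset (hf σ hσ) (hf' σ hσ) (hc σ hσ) (hc σ' hσ') Finset.subset_union_left
      Finset.subset_union_right (Finset.union_subset_union hfσ hf'σ)
  rw [hι, SIota, hm.eq_inv_mul (hf' σ hσ) (hf' σ' hσ') (hc σ' hσ') hf'σ Finset.subset_union_right,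
    hm.eq_inv_mul (hf σ hσ) (hf σ' hσ') (hc σ' hσ') hfσ Finset.subset_union_left]
  group

/-- for contiguous simplicial maps `f − f'` between `A`-monomial simplicial
complexes, the family `ι(σ) = m(f'(σ), f(σ)∪f'(σ))⁻¹ · m(f(σ), f(σ)∪f'(σ))` is natural. -/
theorem stmt5 {A S T : Type*} [Group A] [DecidableEq T]
    (𝒮 : Set (Finset S)) (𝒯 : Set (Finset T))
    (l : Finset S → Finset S → A) (m : Finset T → Finset T → A)
    (hl : IsMonomialSC 𝒮 l) (hm : IsMonomialSC 𝒯 m)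
    (f f' : S → T)
    (hf : ∀ σ ∈ 𝒮, σ.image f ∈ 𝒯) (hf' : ∀ σ ∈ 𝒮, σ.image f' ∈ 𝒯)
    (hc : ∀ σ ∈ 𝒮, σ.image f ∪ σ.image f' ∈ 𝒯) :
    ∀ σ σ' : Finset S, σ ∈ 𝒮 → σ' ∈ 𝒮 → σ ⊆ σ' →
      m (σ.image f') (σ'.image f') * SIota m f f' σ
        = SIota m f f' σ' * m (σ.image f) (σ'.image f) :=
  stmt5_general 𝒮 𝒯 m hm f f' hf hf' hc
end

section
/- Let (f,λ), (f',λ') : (S,𝒮,l) → (T,𝒯,m) and (e,μ), (e',μ') : (T,𝒯,m) → (R,ℛ,n) be morphisms of A-monomial simplicial complexes. If (f,λ) ∼ (f',λ') and (e,μ) ∼ (e',μ'), then (e,μ)∘(f,λ) ∼ (e',μ')∘(f',λ'). -/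
/-- Contiguity of morphisms of `A`-monomial simplicial complexes, as a relation among
morphisms. -/
def SContigM {A S T : Type*} [Group A] [DecidableEq T]
    (𝒮 : Set (Finset S)) (𝒯 : Set (Finset T))
    (l : Finset S → Finset S → A) (m : Finset T → Finset T → A)
    (p q : (S → T) × (Finset S → A)) : Prop :=
  IsSHom 𝒮 𝒯 l m p ∧ IsSHom 𝒮 𝒯 l m q ∧ SContig 𝒮 𝒯 m p q

/-- Homotopy: the reflexive-transitive closure of contiguity. -/
def SHomotopic {A S T : Type*} [Group A] [DecidableEq T]
    (𝒮 : Set (Finset S)) (𝒯 : Set (Finset T))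
    (l : Finset S → Finset S → A) (m : Finset T → Finset T → A) :
    ((S → T) × (Finset S → A)) → ((S → T) × (Finset S → A)) → Prop :=
  Relation.ReflTransGen (SContigM 𝒮 𝒯 l m)

/-- Composition of morphisms of `A`-monomial simplicial complexes. -/
def SComp {A S T U : Type*} [Group A] [DecidableEq T]
    (q : (T → U) × (Finset T → A)) (p : (S → T) × (Finset S → A)) :
    (S → U) × (Finset S → A) :=
  (q.1 ∘ p.1, fun σ => q.2 (σ.image p.1) * p.2 σ)

section SComp

variable {A S T R : Type*} [Group A] [DecidableEq T]
  {𝒮 : Set (Finset S)} {𝒯 : Set (Finset T)} {ℛ : Set (Finset R)}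
  {l : Finset S → Finset S → A} {m : Finset T → Finset T → A} {n : Finset R → Finset R → A}
  {p p' : (S → T) × (Finset S → A)} {q q' : (T → R) × (Finset T → A)}

lemma sComp_snd (q : (T → R) × (Finset T → A)) (p : (S → T) × (Finset S → A))
    (σ : Finset S) : (SComp q p).2 σ = q.2 (σ.image p.1) * p.2 σ :=
  rfl

variable [DecidableEq R]

lemma image_sComp_fst (q : (T → R) × (Finset T → A)) (p : (S → T) × (Finset S → A))
    (σ : Finset S) : σ.image (SComp q p).1 = (σ.image p.1).image q.1 := by
  simp only [SComp, Finset.image_image]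

lemma IsSHom.sComp (hp : IsSHom 𝒮 𝒯 l m p) (hq : IsSHom 𝒯 ℛ m n q) :
    IsSHom 𝒮 ℛ l n (SComp q p) := by
  refine ⟨fun σ hσ => ?_, fun σ τ hσ hτ hστ => ?_⟩
  · rw [image_sComp_fst]
    exact hq.1 _ (hp.1 σ hσ)
  · rw [image_sComp_fst, image_sComp_fst, sComp_snd, sComp_snd, ← mul_assoc,
      hq.2 _ _ (hp.1 σ hσ) (hp.1 τ hτ) (Finset.image_subset_image hστ), mul_assoc,
      hp.2 σ τ hσ hτ hστ, mul_assoc]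

lemma SContigM.postcomp (h : SContigM 𝒮 𝒯 l m p p') (hq : IsSHom 𝒯 ℛ m n q) :
    SContigM 𝒮 ℛ l n (SComp q p) (SComp q p') := by
  obtain ⟨hp, hp', hunion, hcontig⟩ := h
  have himage : ∀ σ : Finset S, σ.image (SComp q p).1 ∪ σ.image (SComp q p').1
      = (σ.image p.1 ∪ σ.image p'.1).image q.1 := fun σ => by
    rw [image_sComp_fst, image_sComp_fst, Finset.image_union]
  refine ⟨hp.sComp hq, hp'.sComp hq, fun σ hσ => ?_, fun σ hσ => ?_⟩
  · rw [himage]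
    exact hq.1 _ (hunion σ hσ)
  · -- with `U = f σ ∪ f' σ`, the two sides become `q.2 U * (m (f σ) U * λ σ)` and
    -- `q.2 U * (m (f' σ) U * λ' σ)`, equal by contiguity of `p` and `p'`
    rw [himage, image_sComp_fst, image_sComp_fst, sComp_snd, sComp_snd, ← mul_assoc,
      ← mul_assoc, hq.2 _ _ (hp.1 σ hσ) (hunion σ hσ) Finset.subset_union_left,
      hq.2 _ _ (hp'.1 σ hσ) (hunion σ hσ) Finset.subset_union_right, mul_assoc, mul_assoc,
      hcontig σ hσ]

lemma SContigM.precomp (h : SContigM 𝒯 ℛ m n q q') (hp : IsSHom 𝒮 𝒯 l m p) :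
    SContigM 𝒮 ℛ l n (SComp q p) (SComp q' p) := by
  obtain ⟨hq, hq', hunion, hcontig⟩ := h
  refine ⟨hp.sComp hq, hp.sComp hq', fun σ hσ => ?_, fun σ hσ => ?_⟩
  · rw [image_sComp_fst, image_sComp_fst]
    exact hunion _ (hp.1 σ hσ)
  · rw [image_sComp_fst, image_sComp_fst, sComp_snd, sComp_snd, ← mul_assoc, ← mul_assoc,
      hcontig _ (hp.1 σ hσ)]

lemma SHomotopic.postcomp (h : SHomotopic 𝒮 𝒯 l m p p') (hq : IsSHom 𝒯 ℛ m n q) :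
    SHomotopic 𝒮 ℛ l n (SComp q p) (SComp q p') :=
  Relation.ReflTransGen.lift (SComp q) (fun _ _ hc => hc.postcomp hq) _ _ h

lemma SHomotopic.precomp (h : SHomotopic 𝒯 ℛ m n q q') (hp : IsSHom 𝒮 𝒯 l m p) :
    SHomotopic 𝒮 ℛ l n (SComp q p) (SComp q' p) :=
  Relation.ReflTransGen.lift (SComp · p) (fun _ _ hc => hc.precomp hp) _ _ h

end SComp

theorem stmt9_general {A S T R : Type*} [Group A] [DecidableEq T] [DecidableEq R]
    (𝒮 : Set (Finset S)) (𝒯 : Set (Finset T)) (ℛ : Set (Finset R))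
    (l : Finset S → Finset S → A) (m : Finset T → Finset T → A)
    (n : Finset R → Finset R → A)
    (p p' : (S → T) × (Finset S → A)) (q q' : (T → R) × (Finset T → A))
    (hp' : IsSHom 𝒮 𝒯 l m p')
    (hq : IsSHom 𝒯 ℛ m n q)
    (h1 : SHomotopic 𝒮 𝒯 l m p p') (h2 : SHomotopic 𝒯 ℛ m n q q') :
    SHomotopic 𝒮 ℛ l n (SComp q p) (SComp q' p') :=
  (h1.postcomp hq).trans (h2.precomp hp')

/-- composition of morphisms of `A`-monomial simplicial complexes preserves
homotopy. -/
theorem stmt9 {A S T R : Type*} [Group A] [DecidableEq T] [DecidableEq R]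
    (𝒮 : Set (Finset S)) (𝒯 : Set (Finset T)) (ℛ : Set (Finset R))
    (l : Finset S → Finset S → A) (m : Finset T → Finset T → A)
    (n : Finset R → Finset R → A)
    (hl : IsMonomialSC 𝒮 l) (hm : IsMonomialSC 𝒯 m) (hn : IsMonomialSC ℛ n)
    (p p' : (S → T) × (Finset S → A)) (q q' : (T → R) × (Finset T → A))
    (hp : IsSHom 𝒮 𝒯 l m p) (hp' : IsSHom 𝒮 𝒯 l m p')
    (hq : IsSHom 𝒯 ℛ m n q) (hq' : IsSHom 𝒯 ℛ m n q')
    (h1 : SHomotopic 𝒮 𝒯 l m p p') (h2 : SHomotopic 𝒯 ℛ m n q q') :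
    SHomotopic 𝒮 ℛ l n (SComp q p) (SComp q' p') :=
  stmt9_general 𝒮 𝒯 ℛ l m n p p' q q' hp' hq h1 h2
end

section
/- Let (X,l) and (Y,m) be A-monomial posets with X finite, and let (f,λ), (f',λ') : (X,l) → (Y,m) be morphisms of A-monomial posets that are homotopic in Poset^A. Then Σ(f,λ) and Σ(f',λ') are homotopic morphisms Σ(X,l) → Σ(Y,m) of A-monomial simplicial complexes. -/
/-- Two morphisms of `A`-monomial posets are comparable: `p ≤ q` or `q ≤ p`. -/
def PComparable {A X Y : Type*} [Group A] [PartialOrder X] [PartialOrder Y]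
    (l : X → X → A) (m : Y → Y → A) (p q : (X → Y) × (X → A)) : Prop :=
  IsPHom l m p ∧ IsPHom l m q ∧ (PLe m p q ∨ PLe m q p)

/-- Homotopy of morphisms of `A`-monomial posets. -/
def PHomotopic {A X Y : Type*} [Group A] [PartialOrder X] [PartialOrder Y]
    (l : X → X → A) (m : Y → Y → A) :
    ((X → Y) × (X → A)) → ((X → Y) × (X → A)) → Prop :=
  Relation.ReflTransGen (PComparable l m)

/-- `Σ(X)`: the set of nonempty finite totally ordered subsets (chains) of the poset `X`. -/
def SigmaSet (X : Type*) [PartialOrder X] : Set (Finset X) :=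
  {σ | σ.Nonempty ∧ ∀ x ∈ σ, ∀ y ∈ σ, x ≤ y ∨ y ≤ x}

/-!
A comparability `p ≤ q` alone does not make `Σp` and `Σq` contiguous: the images of a chain
under `p` and under `q` need not form a single chain. They do when moreover `q x ≤ p x'` for
all `x < x'`. Given `p ≤ q` on a finite poset, move from `p` to `q` in steps, each time
replacing `p` by `q` on the up-set `↑x₀` of a point `x₀` maximal among those where the two
still differ. As `p = q` strictly above `x₀`, each step satisfies that extra condition, hence is
a contiguity, and the set of differing points shrinks.
-/

lemma SContigM.symm {A S T : Type*} [Group A] [DecidableEq T] {𝒮 : Set (Finset S)}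
    {𝒯 : Set (Finset T)} {l : Finset S → Finset S → A} {m : Finset T → Finset T → A}
    {p q : (S → T) × (Finset S → A)} (h : SContigM 𝒮 𝒯 l m p q) : SContigM 𝒮 𝒯 l m q p := by
  obtain ⟨hp, hq, hunion, hlabel⟩ := h
  refine ⟨hq, hp, fun σ hσ => ?_, fun σ hσ => ?_⟩
  · rw [Finset.union_comm]; exact hunion σ hσ
  · rw [Finset.union_comm]; exact (hlabel σ hσ).symm

lemma SHomotopic.symm {A S T : Type*} [Group A] [DecidableEq T] {𝒮 : Set (Finset S)}
    {𝒯 : Set (Finset T)} {l : Finset S → Finset S → A} {m : Finset T → Finset T → A}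
    {p q : (S → T) × (Finset S → A)} (h : SHomotopic 𝒮 𝒯 l m p q) : SHomotopic 𝒮 𝒯 l m q p := by
  induction h with
  | refl => exact .refl
  | tail _ hbc ih => exact .head hbc.symm ih

section Poset

variable {A X Y : Type*} [Group A] [PartialOrder X] [PartialOrder Y] {l : X → X → A}
  {m : Y → Y → A}

def IsGreatestOnChains (g : Finset X → X) : Prop :=
  ∀ σ ∈ SigmaSet X, IsGreatest (σ : Set X) (g σ)

/-- The paper's `Σ(l)` and `Σ(f,λ)`, with `g` choosing the greatest element `σ̄` of a chain. -/
def sigmaLabel (g : Finset X → X) (l : X → X → A) : Finset X → Finset X → A :=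
  fun σ σ' => l (g σ) (g σ')

def sigmaHom (g : Finset X → X) (p : (X → Y) × (X → A)) : (X → Y) × (Finset X → A) :=
  (p.1, fun σ => p.2 (g σ))

lemma PLe.mul_eq (hm : IsMonomialPoset m) {p q : (X → Y) × (X → A)} (hp : IsPHom l m p)
    (hpq : PLe m p q) {x x' : X} (hxx' : x ≤ x') :
    m (p.1 x) (q.1 x') * p.2 x = q.2 x' * l x x' := by
  calc m (p.1 x) (q.1 x') * p.2 x
      = m (p.1 x') (q.1 x') * (m (p.1 x) (p.1 x') * p.2 x) := by
        rw [← mul_assoc, hm.1 _ _ _ (hp.1 hxx') (hpq.1 x')]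
    _ = q.2 x' * l x x' := by rw [hp.2 x x' hxx', ← mul_assoc, hpq.2 x']

def pairPiecewise (U : Set X) [DecidablePred (· ∈ U)] (q p : (X → Y) × (X → A)) :
    (X → Y) × (X → A) :=
  (U.piecewise q.1 p.1, U.piecewise q.2 p.2)

variable {p q : (X → Y) × (X → A)} {U : Set X} [DecidablePred (· ∈ U)]

lemma isPHom_pairPiecewise (hm : IsMonomialPoset m) (hp : IsPHom l m p) (hq : IsPHom l m q)
    (hpq : PLe m p q) (hU : IsUpperSet U) : IsPHom l m (pairPiecewise U q p) := by
  refine ⟨fun x x' hxx' => ?_, fun x x' hxx' => ?_⟩ <;>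
    by_cases hx : x ∈ U <;> by_cases hx' : x' ∈ U <;>
    simp only [pairPiecewise, Set.piecewise, hx, hx', if_true, if_false]
  · exact hq.1 hxx'
  · exact absurd (hU hxx' hx) hx'
  · exact (hp.1 hxx').trans (hpq.1 x')
  · exact hp.1 hxx'
  · exact hq.2 x x' hxx'
  · exact absurd (hU hxx' hx) hx'
  · exact hpq.mul_eq hm hp hxx'
  · exact hp.2 x x' hxx'

lemma pLe_pairPiecewise (hm : IsMonomialPoset m) (hpq : PLe m p q) :
    PLe m p (pairPiecewise U q p) := by
  refine ⟨fun x => ?_, fun x => ?_⟩ <;> by_cases hx : x ∈ U <;>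
    simp only [pairPiecewise, Set.piecewise, hx, if_true, if_false, hm.2, one_mul, le_refl,
      hpq.1 x, hpq.2 x]

lemma pairPiecewise_pLe (hm : IsMonomialPoset m) (hpq : PLe m p q) :
    PLe m (pairPiecewise U q p) q := by
  refine ⟨fun x => ?_, fun x => ?_⟩ <;> by_cases hx : x ∈ U <;>
    simp only [pairPiecewise, Set.piecewise, hx, if_true, if_false, hm.2, one_mul, le_refl,
      hpq.1 x, hpq.2 x]

end Poset

section Sigma

variable {A X Y : Type*} [Group A] [PartialOrder X] [PartialOrder Y] [DecidableEq Y]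
  {gX : Finset X → X} {gY : Finset Y → Y} {l : X → X → A} {m : Y → Y → A}

lemma image_mem_sigmaSet {f : X → Y} (hf : Monotone f) {σ : Finset X} (hσ : σ ∈ SigmaSet X) :
    σ.image f ∈ SigmaSet Y := by
  refine ⟨hσ.1.image f, ?_⟩
  simp only [Finset.forall_mem_image]
  intro x hx y hy
  exact (hσ.2 x hx y hy).imp (@hf x y) (@hf y x)

lemma image_union_image_mem_sigmaSet {f g : X → Y} (hf : Monotone f) (hg : Monotone g)
    (hfg : ∀ x, f x ≤ g x) (hgf : ∀ x x', x < x' → g x ≤ f x') {σ : Finset X}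
    (hσ : σ ∈ SigmaSet X) : σ.image f ∪ σ.image g ∈ SigmaSet Y := by
  have cross : ∀ x ∈ σ, ∀ x' ∈ σ, f x ≤ g x' ∨ g x' ≤ f x := by
    intro x hx x' hx'
    rcases hσ.2 x hx x' hx' with hle | hle
    · exact .inl ((hf hle).trans (hfg x'))
    · rcases hle.lt_or_eq with hlt | rfl
      · exact .inr (hgf x' x hlt)
      · exact .inl (hfg x')
  refine ⟨(hσ.1.image f).mono Finset.subset_union_left, ?_⟩
  simp only [Finset.mem_union, Finset.mem_image]
  rintro _ (⟨x, hx, rfl⟩ | ⟨x, hx, rfl⟩) _ (⟨x', hx', rfl⟩ | ⟨x', hx', rfl⟩)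
  · exact (image_mem_sigmaSet hf hσ).2 _ (Finset.mem_image_of_mem f hx) _
      (Finset.mem_image_of_mem f hx')
  · exact cross x hx x' hx'
  · exact (cross x' hx' x hx).symm
  · exact (image_mem_sigmaSet hg hσ).2 _ (Finset.mem_image_of_mem g hx) _
      (Finset.mem_image_of_mem g hx')

lemma IsGreatestOnChains.apply_image (hgY : IsGreatestOnChains gY) (hgX : IsGreatestOnChains gX)
    {f : X → Y} (hf : Monotone f) {σ : Finset X} (hσ : σ ∈ SigmaSet X) :
    gY (σ.image f) = f (gX σ) :=
  (hgY _ (image_mem_sigmaSet hf hσ)).unique <| by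
    rw [Finset.coe_image]; exact hf.map_isGreatest (hgX σ hσ)

lemma IsPHom.sigma (hgX : IsGreatestOnChains gX) (hgY : IsGreatestOnChains gY)
    {p : (X → Y) × (X → A)} (hp : IsPHom l m p) :
    IsSHom (SigmaSet X) (SigmaSet Y) (sigmaLabel gX l) (sigmaLabel gY m) (sigmaHom gX p) := by
  refine ⟨fun σ hσ => image_mem_sigmaSet hp.1 hσ, fun σ τ hσ hτ hστ => ?_⟩
  have hle : gX σ ≤ gX τ := (hgX τ hτ).2 (hστ (hgX σ hσ).1)
  simpa only [sigmaLabel, sigmaHom, hgY.apply_image hgX hp.1 hσ,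
    hgY.apply_image hgX hp.1 hτ] using hp.2 _ _ hle

lemma sContigM_sigma_of_pLe (hm : IsMonomialPoset m) (hgX : IsGreatestOnChains gX)
    (hgY : IsGreatestOnChains gY) {p q : (X → Y) × (X → A)} (hp : IsPHom l m p)
    (hq : IsPHom l m q) (hpq : PLe m p q) (hqp : ∀ x x', x < x' → q.1 x ≤ p.1 x') :
    SContigM (SigmaSet X) (SigmaSet Y) (sigmaLabel gX l) (sigmaLabel gY m)
      (sigmaHom gX p) (sigmaHom gX q) := by
  have hunion σ (hσ : σ ∈ SigmaSet X) := image_union_image_mem_sigmaSet hp.1 hq.1 hpq.1 hqp hσ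
  refine ⟨hp.sigma hgX hgY, hq.sigma hgX hgY, hunion, fun σ hσ => ?_⟩
  have hgreatest : IsGreatest (↑(σ.image p.1 ∪ σ.image q.1) : Set Y) (q.1 (gX σ)) := by
    refine ⟨Finset.mem_union_right _ (Finset.mem_image_of_mem _ (hgX σ hσ).1), ?_⟩
    intro y hy
    rcases Finset.mem_union.1 hy with hy | hy <;> obtain ⟨x, hx, rfl⟩ := Finset.mem_image.1 hy
    · exact (hpq.1 x).trans (hq.1 ((hgX σ hσ).2 hx))
    · exact hq.1 ((hgX σ hσ).2 hx)
  simp only [sigmaLabel, sigmaHom, hgY.apply_image hgX hp.1 hσ,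
    hgY.apply_image hgX hq.1 hσ, (hgY _ (hunion σ hσ)).unique hgreatest, hm.2,
    one_mul, hpq.2]

lemma sHomotopic_sigma_of_pLe_of_eqOn_compl (hm : IsMonomialPoset m)
    (hgX : IsGreatestOnChains gX) (hgY : IsGreatestOnChains gY) (D : Finset X)
    {p q : (X → Y) × (X → A)} (hp : IsPHom l m p) (hq : IsPHom l m q) (hpq : PLe m p q)
    (hD : ∀ x ∉ D, p.1 x = q.1 x ∧ p.2 x = q.2 x) :
    SHomotopic (SigmaSet X) (SigmaSet Y) (sigmaLabel gX l) (sigmaLabel gY m)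
      (sigmaHom gX p) (sigmaHom gX q) := by
  classical
  induction D using Finset.strongInduction generalizing p with
  | H D ih =>
    rcases D.eq_empty_or_nonempty with rfl | hne
    · obtain rfl : p = q := Prod.ext (funext fun x => (hD x (Finset.notMem_empty x)).1)
        (funext fun x => (hD x (Finset.notMem_empty x)).2)
      exact .refl
    obtain ⟨x₀, hx₀⟩ := D.exists_maximal hne
    have habove : ∀ x, x₀ < x → p.1 x = q.1 x ∧ p.2 x = q.2 x :=
      fun x hx => hD x fun hxD => hx₀.not_gt hxD hx
    set r := pairPiecewise (Set.Ici x₀) q p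
    have hr : IsPHom l m r := isPHom_pairPiecewise hm hp hq hpq (isUpperSet_Ici x₀)
    have hrp : ∀ x x', x < x' → r.1 x ≤ p.1 x' := by
      intro x x' hxx'
      by_cases hx : x₀ ≤ x
      · simp only [r, pairPiecewise, Set.piecewise_eq_of_mem _ _ _ (Set.mem_Ici.2 hx),
          (habove x' (hx.trans_lt hxx')).1]
        exact hq.1 hxx'.le
      · simp only [r, pairPiecewise, Set.piecewise_eq_of_notMem _ _ _ (mt Set.mem_Ici.1 hx)]
        exact hp.1 hxx'.le
    have hrq : ∀ x ∉ D.erase x₀, r.1 x = q.1 x ∧ r.2 x = q.2 x := by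
      intro x hx
      by_cases hx₀x : x₀ ≤ x
      · simp only [r, pairPiecewise, Set.piecewise_eq_of_mem _ _ _ (Set.mem_Ici.2 hx₀x), and_self]
      · simp only [r, pairPiecewise, Set.piecewise_eq_of_notMem _ _ _ (mt Set.mem_Ici.1 hx₀x)]
        exact hD x fun hxD => hx (Finset.mem_erase.2 ⟨fun h => hx₀x (h ▸ le_rfl), hxD⟩)
    exact .head (sContigM_sigma_of_pLe hm hgX hgY hp hr (pLe_pairPiecewise hm hpq) hrp)
      (ih _ (D.erase_ssubset hx₀.prop) hr (pairPiecewise_pLe hm hpq) hrq)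

lemma sHomotopic_sigma_of_pHomotopic [Finite X] (hm : IsMonomialPoset m)
    (hgX : IsGreatestOnChains gX) (hgY : IsGreatestOnChains gY) {p q : (X → Y) × (X → A)}
    (h : PHomotopic l m p q) :
    SHomotopic (SigmaSet X) (SigmaSet Y) (sigmaLabel gX l) (sigmaLabel gY m)
      (sigmaHom gX p) (sigmaHom gX q) := by
  have := Fintype.ofFinite X
  have of_pLe {p q} (hp : IsPHom l m p) (hq : IsPHom l m q) (hpq : PLe m p q) :=
    sHomotopic_sigma_of_pLe_of_eqOn_compl (gY := gY) hm hgX hgY Finset.univ hp hq hpq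
      fun x hx => absurd (Finset.mem_univ x) hx
  induction h with
  | refl => exact .refl
  | tail _ hbc ih =>
    obtain ⟨hb, hc, hbc | hcb⟩ := hbc
    · exact ih.trans (of_pLe hb hc hbc)
    · exact ih.trans (of_pLe hc hb hcb).symm

end Sigma

theorem stmt12_general {A X Y : Type*} [Group A] [PartialOrder X] [PartialOrder Y]
    [Fintype X] [DecidableEq Y]
    (l : X → X → A) (m : Y → Y → A)
    (hm : IsMonomialPoset m)
    (gX : Finset X → X) (hgX : ∀ σ ∈ SigmaSet X, gX σ ∈ σ ∧ ∀ x ∈ σ, x ≤ gX σ)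
    (gY : Finset Y → Y) (hgY : ∀ τ ∈ SigmaSet Y, gY τ ∈ τ ∧ ∀ y ∈ τ, y ≤ gY τ)
    (f f' : X → Y) (lam lam' : X → A)
    (h : PHomotopic l m (f, lam) (f', lam')) :
    SHomotopic (SigmaSet X) (SigmaSet Y) (fun σ σ' => l (gX σ) (gX σ'))
      (fun τ τ' => m (gY τ) (gY τ'))
      (f, fun σ => lam (gX σ)) (f', fun σ => lam' (gX σ)) :=
  sHomotopic_sigma_of_pHomotopic hm hgX hgY h

/-- for `X` finite, `Σ` preserves homotopy: if `(f,λ) ∼ (f',λ')` in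
`Poset^A`, then `Σ(f,λ) = (f, σ ↦ λ(σ̄))` and `Σ(f',λ') = (f', σ ↦ λ'(σ̄))` are homotopic
morphisms `Σ(X,l) → Σ(Y,m)` in `Simp^A`.  Here `gX`/`gY` pick the greatest element `σ̄` of
a chain. -/
theorem stmt12 {A X Y : Type*} [Group A] [PartialOrder X] [PartialOrder Y]
    [Fintype X] [DecidableEq Y]
    (l : X → X → A) (m : Y → Y → A)
    (hl : IsMonomialPoset l) (hm : IsMonomialPoset m)
    (gX : Finset X → X) (hgX : ∀ σ ∈ SigmaSet X, gX σ ∈ σ ∧ ∀ x ∈ σ, x ≤ gX σ)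
    (gY : Finset Y → Y) (hgY : ∀ τ ∈ SigmaSet Y, gY τ ∈ τ ∧ ∀ y ∈ τ, y ≤ gY τ)
    (f f' : X → Y) (lam lam' : X → A)
    (hp : IsPHom l m (f, lam)) (hp' : IsPHom l m (f', lam'))
    (h : PHomotopic l m (f, lam) (f', lam')) :
    SHomotopic (SigmaSet X) (SigmaSet Y) (fun σ σ' => l (gX σ) (gX σ'))
      (fun τ τ' => m (gY τ) (gY τ'))
      (f, fun σ => lam (gX σ)) (f', fun σ => lam' (gX σ)) :=
  stmt12_general l m hm gX hgX gY hgY f f' lam lam' h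
end

section
/- Let (f,λ), (f',λ') : (S,𝒮,l) → (T,𝒯,m) be morphisms of A-monomial simplicial complexes that are homotopic in Simp^A. Then Π(f,λ) and Π(f',λ') are homotopic morphisms Π(S,𝒮,l) → Π(T,𝒯,m) of A-monomial posets. -/
/-!
It suffices to treat one contiguity `(f,λ) − (f',λ')`. Then `σ ↦ f(σ) ∪ f'(σ)`,
with twist `σ ↦ m(f(σ), f(σ) ∪ f'(σ)) · λ(σ)`, is a morphism of `A`-monomial posets lying
above both `Π(f,λ)` and `Π(f',λ')`; the contiguity equation is exactly the condition for it to
lie above `Π(f',λ')`. So `Π(f,λ) ≤ · ≥ Π(f',λ')`.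
-/

theorem IsMonomialSC.mul_eq_mul_of_subset {A T : Type*} [Group A] {𝒯 : Set (Finset T)}
    {m : Finset T → Finset T → A} (hm : IsMonomialSC 𝒯 m) {σ σ' τ τ' : Finset T}
    (hσ : σ ∈ 𝒯) (hσ' : σ' ∈ 𝒯) (hτ : τ ∈ 𝒯) (hτ' : τ' ∈ 𝒯)
    (hσσ' : σ ⊆ σ') (hσ'τ' : σ' ⊆ τ') (hστ : σ ⊆ τ) (hττ' : τ ⊆ τ') :
    m σ' τ' * m σ σ' = m τ τ' * m σ τ := by
  rw [hm.2.1 _ _ _ hσ hσ' hτ' hσσ' hσ'τ', hm.2.1 _ _ _ hσ hτ hτ' hστ hττ']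

namespace MonomialSC

variable {A S T : Type*} [Group A] [DecidableEq T]
  {𝒮 : Set (Finset S)} {𝒯 : Set (Finset T)}
  {l : Finset S → Finset S → A} {m : Finset T → Finset T → A}

/-- The functor `Π` on morphisms. -/
def piMap (p : (S → T) × (Finset S → A)) (hp : IsSHom 𝒮 𝒯 l m p) :
    ({σ // σ ∈ 𝒮} → {τ // τ ∈ 𝒯}) × ({σ // σ ∈ 𝒮} → A) :=
  (fun σ => ⟨σ.1.image p.1, hp.1 σ.1 σ.2⟩, fun σ => p.2 σ.1)

theorem isPHom_piMap {p : (S → T) × (Finset S → A)} (hp : IsSHom 𝒮 𝒯 l m p) :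
    IsPHom (fun σ τ : {σ // σ ∈ 𝒮} => l σ.1 τ.1) (fun σ τ : {τ // τ ∈ 𝒯} => m σ.1 τ.1)
      (piMap p hp) :=
  ⟨fun _ _ hστ => Finset.image_subset_image hστ,
    fun σ τ hστ => hp.2 σ.1 τ.1 σ.2 τ.2 hστ⟩

def unionMap (p q : (S → T) × (Finset S → A)) (hpq : SContig 𝒮 𝒯 m p q) :
    ({σ // σ ∈ 𝒮} → {τ // τ ∈ 𝒯}) × ({σ // σ ∈ 𝒮} → A) :=
  (fun σ => ⟨σ.1.image p.1 ∪ σ.1.image q.1, hpq.1 σ.1 σ.2⟩,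
    fun σ => m (σ.1.image p.1) (σ.1.image p.1 ∪ σ.1.image q.1) * p.2 σ.1)

theorem isPHom_unionMap (hm : IsMonomialSC 𝒯 m) {p q : (S → T) × (Finset S → A)}
    (hp : IsSHom 𝒮 𝒯 l m p) (hpq : SContig 𝒮 𝒯 m p q) :
    IsPHom (fun σ τ : {σ // σ ∈ 𝒮} => l σ.1 τ.1) (fun σ τ : {τ // τ ∈ 𝒯} => m σ.1 τ.1)
      (unionMap p q hpq) := by
  have hmono : ∀ σ τ : Finset S, σ ⊆ τ →
      σ.image p.1 ∪ σ.image q.1 ⊆ τ.image p.1 ∪ τ.image q.1 := fun _ _ hστ =>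
    Finset.union_subset_union (Finset.image_subset_image hστ) (Finset.image_subset_image hστ)
  refine ⟨fun σ τ hστ => hmono σ.1 τ.1 hστ, fun ⟨σ, hσ⟩ ⟨τ, hτ⟩ hστ => ?_⟩
  have hsquare := hm.mul_eq_mul_of_subset (hp.1 σ hσ) (hpq.1 σ hσ) (hp.1 τ hτ) (hpq.1 τ hτ)
    Finset.subset_union_left (hmono σ τ hστ) (Finset.image_subset_image hστ)
    Finset.subset_union_left
  simp only [unionMap]
  rw [← mul_assoc, hsquare, mul_assoc, hp.2 σ τ hσ hτ hστ, mul_assoc]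

theorem pComparable_piMap_unionMap (hm : IsMonomialSC 𝒯 m) {p q : (S → T) × (Finset S → A)}
    (hp : IsSHom 𝒮 𝒯 l m p) (hpq : SContig 𝒮 𝒯 m p q) :
    PComparable (fun σ τ : {σ // σ ∈ 𝒮} => l σ.1 τ.1) (fun σ τ : {τ // τ ∈ 𝒯} => m σ.1 τ.1)
      (piMap p hp) (unionMap p q hpq) :=
  ⟨isPHom_piMap hp, isPHom_unionMap hm hp hpq,
    .inl ⟨fun _ => Finset.subset_union_left, fun _ => rfl⟩⟩

theorem pComparable_unionMap_piMap (hm : IsMonomialSC 𝒯 m) {p q : (S → T) × (Finset S → A)}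
    (hp : IsSHom 𝒮 𝒯 l m p) (hq : IsSHom 𝒮 𝒯 l m q) (hpq : SContig 𝒮 𝒯 m p q) :
    PComparable (fun σ τ : {σ // σ ∈ 𝒮} => l σ.1 τ.1) (fun σ τ : {τ // τ ∈ 𝒯} => m σ.1 τ.1)
      (unionMap p q hpq) (piMap q hq) :=
  ⟨isPHom_unionMap hm hp hpq, isPHom_piMap hq,
    .inr ⟨fun _ => Finset.subset_union_right, fun σ => (hpq.2 σ.1 σ.2).symm⟩⟩

theorem pHomotopic_piMap_of_sContigM (hm : IsMonomialSC 𝒯 m)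
    {p q : (S → T) × (Finset S → A)} (hpq : SContigM 𝒮 𝒯 l m p q) :
    PHomotopic (fun σ τ : {σ // σ ∈ 𝒮} => l σ.1 τ.1) (fun σ τ : {τ // τ ∈ 𝒯} => m σ.1 τ.1)
      (piMap p hpq.1) (piMap q hpq.2.1) :=
  .head (pComparable_piMap_unionMap hm hpq.1 hpq.2.2)
    (.single (pComparable_unionMap_piMap hm hpq.1 hpq.2.1 hpq.2.2))

theorem pHomotopic_piMap_of_sHomotopic (hm : IsMonomialSC 𝒯 m)
    {p q : (S → T) × (Finset S → A)} (hp : IsSHom 𝒮 𝒯 l m p) (hq : IsSHom 𝒮 𝒯 l m q)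
    (hpq : SHomotopic 𝒮 𝒯 l m p q) :
    PHomotopic (fun σ τ : {σ // σ ∈ 𝒮} => l σ.1 τ.1) (fun σ τ : {τ // τ ∈ 𝒯} => m σ.1 τ.1)
      (piMap p hp) (piMap q hq) := by
  induction hpq with
  | refl => exact .refl
  | tail _ hrq ih => exact (ih hrq.1).trans (pHomotopic_piMap_of_sContigM hm hrq)

end MonomialSC

theorem stmt16_general {A S T : Type*} [Group A] [DecidableEq T]
    (𝒮 : Set (Finset S)) (𝒯 : Set (Finset T))
    (l : Finset S → Finset S → A) (m : Finset T → Finset T → A)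
    (hm : IsMonomialSC 𝒯 m)
    (f f' : S → T) (lam lam' : Finset S → A)
    (hp : IsSHom 𝒮 𝒯 l m (f, lam)) (hp' : IsSHom 𝒮 𝒯 l m (f', lam'))
    (h : SHomotopic 𝒮 𝒯 l m (f, lam) (f', lam')) :
    PHomotopic (fun σ τ : {σ : Finset S // σ ∈ 𝒮} => l σ.1 τ.1)
      (fun σ τ : {τ : Finset T // τ ∈ 𝒯} => m σ.1 τ.1)
      ((fun σ : {σ : Finset S // σ ∈ 𝒮} =>
          (⟨σ.1.image f, hp.1 σ.1 σ.2⟩ : {τ : Finset T // τ ∈ 𝒯})),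
        fun σ : {σ : Finset S // σ ∈ 𝒮} => lam σ.1)
      ((fun σ : {σ : Finset S // σ ∈ 𝒮} =>
          (⟨σ.1.image f', hp'.1 σ.1 σ.2⟩ : {τ : Finset T // τ ∈ 𝒯})),
        fun σ : {σ : Finset S // σ ∈ 𝒮} => lam' σ.1) :=
  MonomialSC.pHomotopic_piMap_of_sHomotopic hm hp hp' h

/-- the functor `Π`, sending `(S,𝒮,l)` to the `A`-monomial poset `(𝒮,l)`
(with `𝒮` ordered by inclusion) and `(f,λ)` to `(σ ↦ f(σ), λ)`, preserves homotopy. -/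
theorem stmt16 {A S T : Type*} [Group A] [DecidableEq T]
    (𝒮 : Set (Finset S)) (𝒯 : Set (Finset T))
    (l : Finset S → Finset S → A) (m : Finset T → Finset T → A)
    (hl : IsMonomialSC 𝒮 l) (hm : IsMonomialSC 𝒯 m)
    (f f' : S → T) (lam lam' : Finset S → A)
    (hp : IsSHom 𝒮 𝒯 l m (f, lam)) (hp' : IsSHom 𝒮 𝒯 l m (f', lam'))
    (h : SHomotopic 𝒮 𝒯 l m (f, lam) (f', lam')) :
    PHomotopic (fun σ τ : {σ : Finset S // σ ∈ 𝒮} => l σ.1 τ.1)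
      (fun σ τ : {τ : Finset T // τ ∈ 𝒯} => m σ.1 τ.1)
      ((fun σ : {σ : Finset S // σ ∈ 𝒮} =>
          (⟨σ.1.image f, hp.1 σ.1 σ.2⟩ : {τ : Finset T // τ ∈ 𝒯})),
        fun σ : {σ : Finset S // σ ∈ 𝒮} => lam σ.1)
      ((fun σ : {σ : Finset S // σ ∈ 𝒮} =>
          (⟨σ.1.image f', hp'.1 σ.1 σ.2⟩ : {τ : Finset T // τ ∈ 𝒯})),
        fun σ : {σ : Finset S // σ ∈ 𝒮} => lam' σ.1) :=
  stmt16_general 𝒮 𝒯 l m hm f f' lam lam' hp hp' h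
end

section
/- Let (f,λ), (f',λ') : (S,𝒮,l) → (T,𝒯,m) be contiguous morphisms of A-monomial simplicial complexes, i.e., (f,λ) − (f',λ'). Define f∪f' : 𝒮 → 𝒯 by (f∪f')(σ) = f(σ) ∪ f'(σ) and η : 𝒮 → A by η(σ) = m(f'(σ), f(σ)∪f'(σ))·λ'(σ). Then (f∪f', η) is a morphism (𝒮,l) → (𝒯,m) of A-monomial posets (with 𝒮, 𝒯 ordered by inclusion), and (σ ↦ f(σ), λ) ≤ (f∪f', η) and (σ ↦ f'(σ), λ') ≤ (f∪f', η) as morphisms of A-monomial posets. -/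
/-!
The pair `(f ∪ f', η)` is `(f', λ')` pushed up along `f' ≤ f ∪ f'`: for any morphism `(g, ν)` and any
monotone `h ≥ g`, the pair `(h, x ↦ m(g x, h x) · ν x)` is again a morphism lying above `(g, ν)`,
because the cocycle law of `m` lets the correction factor be moved along the square
`g x ≤ g x'`, `h x ≤ h x'`. Contiguity is precisely the statement that pushing `(f, λ)` up along
`f ≤ f ∪ f'` gives the same second component, so `(f, λ) ≤ (f ∪ f', η)` as well.
-/

def PHom.pushUp {A X Y : Type*} [Group A] (m : Y → Y → A) (p : (X → Y) × (X → A))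
    (g : X → Y) : (X → Y) × (X → A) :=
  (g, fun x => m (p.1 x) (g x) * p.2 x)

section MonomialPoset

variable {A X Y : Type*} [Group A] [PartialOrder X] [PartialOrder Y]
  {l : X → X → A} {m : Y → Y → A} {p : (X → Y) × (X → A)} {g : X → Y}

theorem IsPHom.pushUp (hm : IsMonomialPoset m) (hp : IsPHom l m p) (hg : Monotone g)
    (hpg : ∀ x, p.1 x ≤ g x) : IsPHom l m (PHom.pushUp m p g) := by
  refine ⟨hg, fun x x' hxx' => ?_⟩
  calc m (g x) (g x') * (m (p.1 x) (g x) * p.2 x)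
      = m (p.1 x) (g x') * p.2 x := by
        rw [← mul_assoc, hm.1 _ _ _ (hpg x) (hg hxx')]
    _ = m (p.1 x') (g x') * (m (p.1 x) (p.1 x') * p.2 x) := by
        rw [← mul_assoc, hm.1 _ _ _ (hp.1 hxx') (hpg x')]
    _ = m (p.1 x') (g x') * p.2 x' * l x x' := by
        rw [hp.2 x x' hxx', mul_assoc]

theorem pLe_pushUp (hpg : ∀ x, p.1 x ≤ g x) : PLe m p (PHom.pushUp m p g) :=
  ⟨hpg, fun _ => rfl⟩

end MonomialPoset

section MonomialSC

variable {A S T : Type*} [Group A] [DecidableEq T] {𝒮 : Set (Finset S)} {𝒯 : Set (Finset T)}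
  {l : Finset S → Finset S → A} {m : Finset T → Finset T → A}

theorem IsMonomialSC.isMonomialPoset (hl : IsMonomialSC 𝒮 l) :
    IsMonomialPoset (fun σ τ : {σ : Finset S // σ ∈ 𝒮} => l σ.1 τ.1) :=
  ⟨fun σ τ υ hστ hτυ => hl.2.1 _ _ _ σ.2 τ.2 υ.2 hστ hτυ, fun σ => hl.2.2 σ.1 σ.2⟩

theorem IsSHom.isPHom {p : (S → T) × (Finset S → A)} (hp : IsSHom 𝒮 𝒯 l m p) :
    IsPHom (fun σ τ : {σ : Finset S // σ ∈ 𝒮} => l σ.1 τ.1)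
      (fun σ τ : {τ : Finset T // τ ∈ 𝒯} => m σ.1 τ.1)
      (fun σ => ⟨σ.1.image p.1, hp.1 σ.1 σ.2⟩, fun σ => p.2 σ.1) :=
  ⟨fun _ _ hστ => Finset.image_subset_image hστ,
    fun σ τ hστ => hp.2 σ.1 τ.1 σ.2 τ.2 hστ⟩

end MonomialSC

theorem stmt17_general {A S T : Type*} [Group A] [DecidableEq T]
    (𝒮 : Set (Finset S)) (𝒯 : Set (Finset T))
    (l : Finset S → Finset S → A) (m : Finset T → Finset T → A)
    (hm : IsMonomialSC 𝒯 m)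
    (f f' : S → T) (lam lam' : Finset S → A)
    (hp : IsSHom 𝒮 𝒯 l m (f, lam)) (hp' : IsSHom 𝒮 𝒯 l m (f', lam'))
    (hc : SContig 𝒮 𝒯 m (f, lam) (f', lam')) :
    IsPHom (fun σ τ : {σ : Finset S // σ ∈ 𝒮} => l σ.1 τ.1)
        (fun σ τ : {τ : Finset T // τ ∈ 𝒯} => m σ.1 τ.1)
        ((fun σ : {σ : Finset S // σ ∈ 𝒮} =>
            (⟨σ.1.image f ∪ σ.1.image f', hc.1 σ.1 σ.2⟩ : {τ : Finset T // τ ∈ 𝒯})),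
          fun σ : {σ : Finset S // σ ∈ 𝒮} =>
            m (σ.1.image f') (σ.1.image f ∪ σ.1.image f') * lam' σ.1) ∧
      PLe (fun σ τ : {τ : Finset T // τ ∈ 𝒯} => m σ.1 τ.1)
        ((fun σ : {σ : Finset S // σ ∈ 𝒮} =>
            (⟨σ.1.image f, hp.1 σ.1 σ.2⟩ : {τ : Finset T // τ ∈ 𝒯})),
          fun σ : {σ : Finset S // σ ∈ 𝒮} => lam σ.1)
        ((fun σ : {σ : Finset S // σ ∈ 𝒮} =>
            (⟨σ.1.image f ∪ σ.1.image f', hc.1 σ.1 σ.2⟩ : {τ : Finset T // τ ∈ 𝒯})),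
          fun σ : {σ : Finset S // σ ∈ 𝒮} =>
            m (σ.1.image f') (σ.1.image f ∪ σ.1.image f') * lam' σ.1) ∧
      PLe (fun σ τ : {τ : Finset T // τ ∈ 𝒯} => m σ.1 τ.1)
        ((fun σ : {σ : Finset S // σ ∈ 𝒮} =>
            (⟨σ.1.image f', hp'.1 σ.1 σ.2⟩ : {τ : Finset T // τ ∈ 𝒯})),
          fun σ : {σ : Finset S // σ ∈ 𝒮} => lam' σ.1)
        ((fun σ : {σ : Finset S // σ ∈ 𝒮} =>
            (⟨σ.1.image f ∪ σ.1.image f', hc.1 σ.1 σ.2⟩ : {τ : Finset T // τ ∈ 𝒯})),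
          fun σ : {σ : Finset S // σ ∈ 𝒮} =>
            m (σ.1.image f') (σ.1.image f ∪ σ.1.image f') * lam' σ.1) := by
  have hunion_mono : Monotone fun σ : {σ : Finset S // σ ∈ 𝒮} =>
      (⟨σ.1.image f ∪ σ.1.image f', hc.1 σ.1 σ.2⟩ : {τ : Finset T // τ ∈ 𝒯}) :=
    fun _ _ hστ => Finset.union_subset_union (Finset.image_subset_image hστ)
      (Finset.image_subset_image hστ)
  have hle_union : ∀ σ : {σ : Finset S // σ ∈ 𝒮},
      σ.1.image f' ⊆ σ.1.image f ∪ σ.1.image f' := fun _ => Finset.subset_union_right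
  exact ⟨hp'.isPHom.pushUp hm.isMonomialPoset hunion_mono hle_union,
    ⟨fun _ => Finset.subset_union_left, fun σ => hc.2 σ.1 σ.2⟩, pLe_pushUp hle_union⟩

/-- if `(f,λ) − (f',λ')` are contiguous morphisms of `A`-monomial
simplicial complexes, then `(f∪f', η)` with `(f∪f')(σ) = f(σ) ∪ f'(σ)` and
`η(σ) = m(f'(σ), f(σ)∪f'(σ))·λ'(σ)` is a morphism `(𝒮,l) → (𝒯,m)` of `A`-monomial
posets (`𝒮`, `𝒯` ordered by inclusion), with `Π(f,λ) ≤ (f∪f',η)` and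
`Π(f',λ') ≤ (f∪f',η)`. -/
theorem stmt17 {A S T : Type*} [Group A] [DecidableEq T]
    (𝒮 : Set (Finset S)) (𝒯 : Set (Finset T))
    (l : Finset S → Finset S → A) (m : Finset T → Finset T → A)
    (hl : IsMonomialSC 𝒮 l) (hm : IsMonomialSC 𝒯 m)
    (f f' : S → T) (lam lam' : Finset S → A)
    (hp : IsSHom 𝒮 𝒯 l m (f, lam)) (hp' : IsSHom 𝒮 𝒯 l m (f', lam'))
    (hc : SContig 𝒮 𝒯 m (f, lam) (f', lam')) :
    IsPHom (fun σ τ : {σ : Finset S // σ ∈ 𝒮} => l σ.1 τ.1)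
        (fun σ τ : {τ : Finset T // τ ∈ 𝒯} => m σ.1 τ.1)
        ((fun σ : {σ : Finset S // σ ∈ 𝒮} =>
            (⟨σ.1.image f ∪ σ.1.image f', hc.1 σ.1 σ.2⟩ : {τ : Finset T // τ ∈ 𝒯})),
          fun σ : {σ : Finset S // σ ∈ 𝒮} =>
            m (σ.1.image f') (σ.1.image f ∪ σ.1.image f') * lam' σ.1) ∧
      PLe (fun σ τ : {τ : Finset T // τ ∈ 𝒯} => m σ.1 τ.1)
        ((fun σ : {σ : Finset S // σ ∈ 𝒮} =>
            (⟨σ.1.image f, hp.1 σ.1 σ.2⟩ : {τ : Finset T // τ ∈ 𝒯})),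
          fun σ : {σ : Finset S // σ ∈ 𝒮} => lam σ.1)
        ((fun σ : {σ : Finset S // σ ∈ 𝒮} =>
            (⟨σ.1.image f ∪ σ.1.image f', hc.1 σ.1 σ.2⟩ : {τ : Finset T // τ ∈ 𝒯})),
          fun σ : {σ : Finset S // σ ∈ 𝒮} =>
            m (σ.1.image f') (σ.1.image f ∪ σ.1.image f') * lam' σ.1) ∧
      PLe (fun σ τ : {τ : Finset T // τ ∈ 𝒯} => m σ.1 τ.1)
        ((fun σ : {σ : Finset S // σ ∈ 𝒮} =>
            (⟨σ.1.image f', hp'.1 σ.1 σ.2⟩ : {τ : Finset T // τ ∈ 𝒯})),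
          fun σ : {σ : Finset S // σ ∈ 𝒮} => lam' σ.1)
        ((fun σ : {σ : Finset S // σ ∈ 𝒮} =>
            (⟨σ.1.image f ∪ σ.1.image f', hc.1 σ.1 σ.2⟩ : {τ : Finset T // τ ∈ 𝒯})),
          fun σ : {σ : Finset S // σ ∈ 𝒮} =>
            m (σ.1.image f') (σ.1.image f ∪ σ.1.image f') * lam' σ.1) :=
  stmt17_general 𝒮 𝒯 l m hm f f' lam lam' hp hp' hc
end

section
/- Let (f,λ), (f',λ') : (S,𝒮,l) → (T,𝒯,m) be morphisms of A-monomial simplicial complexes such that Π(f,λ) and Π(f',λ') are homotopic morphisms (𝒮,l) → (𝒯,m) of A-monomial posets. Then (f,λ) and (f',λ') are homotopic in Simp^A. In particular, if Π(f,λ) ≤ Π(f',λ') then (f,λ) − (f',λ'). -/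
/-!
A simplicial morphism `p` is carried by a poset morphism `q : (𝒮,l) → (𝒯,m)` when `Π p ≤ q`.
Every `q` carries some `p`: send a vertex `s` to any vertex of the simplex `q {s}` and correct the
scalars by `m`; and the morphism law of `q` forces that of `p`. Two simplicial morphisms carried by
the same `q` are contiguous, because `q σ` is a simplex containing both images of `σ`, and the
cocycle law of `m` identifies the two scalars in `m(-, q σ)`. So along a zigzag of comparable
poset morphisms from `Π(f,λ)` to `Π(f',λ')`, carried simplicial morphisms chosen at each step form
a chain of contiguities from `(f,λ)` to `(f',λ')`.
-/

section

variable {A S T : Type*} [Group A] [DecidableEq T] {𝒮 : Set (Finset S)} {𝒯 : Set (Finset T)}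
  {l : Finset S → Finset S → A} {m : Finset T → Finset T → A}

open Finset

/-- `Π p ≤ q`, stated without asking `p` to send simplices to simplices. -/
def PiLe (m : Finset T → Finset T → A) (p : (S → T) × (Finset S → A))
    (q : (𝒮 → 𝒯) × (𝒮 → A)) : Prop :=
  ∀ σ : 𝒮, σ.1.image p.1 ⊆ q.1 σ ∧ m (σ.1.image p.1) (q.1 σ) * p.2 σ = q.2 σ

/-- The poset morphism `Π p`. -/
def piMor (p : (S → T) × (Finset S → A)) (hp : ∀ σ ∈ 𝒮, σ.image p.1 ∈ 𝒯) :
    (𝒮 → 𝒯) × (𝒮 → A) :=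
  (fun σ => ⟨σ.1.image p.1, hp σ.1 σ.2⟩, fun σ => p.2 σ)

theorem piLe_piMor (hm : IsMonomialSC 𝒯 m) {p : (S → T) × (Finset S → A)}
    (hp : ∀ σ ∈ 𝒮, σ.image p.1 ∈ 𝒯) : PiLe m p (piMor p hp) := fun σ =>
  ⟨subset_rfl, by simp only [piMor, hm.2.2 _ (hp σ.1 σ.2), one_mul]⟩

theorem exists_piLe (h𝒮 : IsSComplex 𝒮) (h𝒯 : IsSComplex 𝒯) {q : (𝒮 → 𝒯) × (𝒮 → A)}
    (hq : Monotone q.1) : ∃ p : (S → T) × (Finset S → A), PiLe m p q := by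
  classical
  choose g hg using fun s : S => h𝒯.1 _ (q.1 ⟨{s}, h𝒮.2.1 s⟩).2
  have hsub (σ : 𝒮) : σ.1.image g ⊆ q.1 σ := by
    intro t ht
    obtain ⟨s, hs, rfl⟩ := mem_image.1 ht
    exact hq (show (⟨{s}, h𝒮.2.1 s⟩ : 𝒮) ≤ σ from singleton_subset_iff.2 hs) (hg s)
  refine ⟨(g, fun σ => if hσ : σ ∈ 𝒮 then (m (σ.image g) (q.1 ⟨σ, hσ⟩))⁻¹ * q.2 ⟨σ, hσ⟩
    else 1), fun σ => ⟨hsub σ, ?_⟩⟩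
  simp only [dif_pos σ.2, mul_inv_cancel_left]

namespace PiLe

variable {p p' : (S → T) × (Finset S → A)} {q q' : (𝒮 → 𝒯) × (𝒮 → A)}

theorem image_mem (h𝒮 : IsSComplex 𝒮) (h𝒯 : IsSComplex 𝒯) (h : PiLe m p q) {σ : Finset S}
    (hσ : σ ∈ 𝒮) : σ.image p.1 ∈ 𝒯 :=
  h𝒯.2.2 _ (q.1 ⟨σ, hσ⟩).2 _ (h ⟨σ, hσ⟩).1 ((h𝒮.1 σ hσ).image _)

theorem trans (h𝒮 : IsSComplex 𝒮) (hm : IsMonomialSC 𝒯 m) (h : PiLe m p q)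
    (hqq' : PLe (fun σ τ : 𝒯 => m σ τ) q q') : PiLe m p q' := by
  intro σ
  have hcomp := hm.2.1 _ _ _ (h.image_mem h𝒮 hm.1 σ.2) (q.1 σ).2 (q'.1 σ).2 (h σ).1 (hqq'.1 σ)
  refine ⟨(h σ).1.trans (hqq'.1 σ), ?_⟩
  rw [← hcomp, mul_assoc, (h σ).2]
  exact hqq'.2 σ

theorem sContig (h𝒮 : IsSComplex 𝒮) (hm : IsMonomialSC 𝒯 m) (h : PiLe m p q)
    (h' : PiLe m p' q) : SContig 𝒮 𝒯 m p p' := by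
  have hsub (σ : 𝒮) : σ.1.image p.1 ∪ σ.1.image p'.1 ⊆ q.1 σ :=
    union_subset (h σ).1 (h' σ).1
  have hmem {σ : Finset S} (hσ : σ ∈ 𝒮) : σ.image p.1 ∪ σ.image p'.1 ∈ 𝒯 :=
    hm.1.2.2 _ (q.1 ⟨σ, hσ⟩).2 _ (hsub ⟨σ, hσ⟩)
      (((h𝒮.1 σ hσ).image _).mono subset_union_left)
  refine ⟨fun σ hσ => hmem hσ, fun σ hσ => mul_left_cancel (a := m (σ.image p.1 ∪ σ.image p'.1)
    (q.1 ⟨σ, hσ⟩)) ?_⟩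
  rw [← mul_assoc, ← mul_assoc,
    hm.2.1 _ _ _ (h.image_mem h𝒮 hm.1 hσ) (hmem hσ) (q.1 ⟨σ, hσ⟩).2 subset_union_left
      (hsub ⟨σ, hσ⟩),
    hm.2.1 _ _ _ (h'.image_mem h𝒮 hm.1 hσ) (hmem hσ) (q.1 ⟨σ, hσ⟩).2 subset_union_right
      (hsub ⟨σ, hσ⟩)]
  exact (h ⟨σ, hσ⟩).2.trans (h' ⟨σ, hσ⟩).2.symm

theorem isSHom (h𝒮 : IsSComplex 𝒮) (hm : IsMonomialSC 𝒯 m)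
    (hq : IsPHom (fun σ τ : 𝒮 => l σ τ) (fun σ τ : 𝒯 => m σ τ) q) (h : PiLe m p q) :
    IsSHom 𝒮 𝒯 l m p := by
  refine ⟨fun σ hσ => h.image_mem h𝒮 hm.1 hσ, fun σ τ hσ hτ hστ => ?_⟩
  set σ' : 𝒮 := ⟨σ, hσ⟩
  set τ' : 𝒮 := ⟨τ, hτ⟩
  have hστ' : σ' ≤ τ' := hστ
  have hpσ := h.image_mem h𝒮 hm.1 hσ
  have hpτ := h.image_mem h𝒮 hm.1 hτ
  apply mul_left_cancel (a := m (τ.image p.1) (q.1 τ'))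
  calc m (τ.image p.1) (q.1 τ') * (m (σ.image p.1) (τ.image p.1) * p.2 σ)
      = m (σ.image p.1) (q.1 τ') * p.2 σ := by
        rw [← mul_assoc, hm.2.1 _ _ _ hpσ hpτ (q.1 τ').2 (image_subset_image hστ) (h τ').1]
    _ = m (q.1 σ') (q.1 τ') * (m (σ.image p.1) (q.1 σ') * p.2 σ) := by
        rw [← mul_assoc, hm.2.1 _ _ _ hpσ (q.1 σ').2 (q.1 τ').2 (h σ').1 (hq.1 hστ')]
    _ = q.2 τ' * l σ τ := by rw [(h σ').2]; exact hq.2 σ' τ' hστ'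
    _ = m (τ.image p.1) (q.1 τ') * (p.2 τ * l σ τ) := by rw [← mul_assoc, (h τ').2]

end PiLe

theorem exists_sContigM_of_pComparable (h𝒮 : IsSComplex 𝒮) (hm : IsMonomialSC 𝒯 m)
    {p : (S → T) × (Finset S → A)} {q q' : (𝒮 → 𝒯) × (𝒮 → A)} (hp : IsSHom 𝒮 𝒯 l m p)
    (hpq : PiLe m p q) (hqq' : PComparable (fun σ τ : 𝒮 => l σ τ) (fun σ τ : 𝒯 => m σ τ) q q') :
    ∃ p', IsSHom 𝒮 𝒯 l m p' ∧ PiLe m p' q' ∧ SContigM 𝒮 𝒯 l m p p' := by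
  obtain ⟨-, hq', hle | hle⟩ := hqq'
  all_goals
    obtain ⟨p', hp'q'⟩ := exists_piLe (m := m) h𝒮 hm.1 hq'.1
    have hp' := hp'q'.isSHom h𝒮 hm hq'
    refine ⟨p', hp', hp'q', hp, hp', ?_⟩
  · exact (hpq.trans h𝒮 hm hle).sContig h𝒮 hm hp'q'
  · exact hpq.sContig h𝒮 hm (hp'q'.trans h𝒮 hm hle)

theorem exists_sHomotopic_of_pHomotopic (h𝒮 : IsSComplex 𝒮) (hm : IsMonomialSC 𝒯 m)
    {p : (S → T) × (Finset S → A)} {q q' : (𝒮 → 𝒯) × (𝒮 → A)} (hp : IsSHom 𝒮 𝒯 l m p)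
    (hpq : PiLe m p q) (hqq' : PHomotopic (fun σ τ : 𝒮 => l σ τ) (fun σ τ : 𝒯 => m σ τ) q q') :
    ∃ p', IsSHom 𝒮 𝒯 l m p' ∧ PiLe m p' q' ∧ SHomotopic 𝒮 𝒯 l m p p' := by
  induction hqq' with
  | refl => exact ⟨p, hp, hpq, .refl⟩
  | tail _ hstep ih =>
    obtain ⟨p₁, hp₁, hp₁q, hpp₁⟩ := ih
    obtain ⟨p₂, hp₂, hp₂q, hp₁p₂⟩ := exists_sContigM_of_pComparable h𝒮 hm hp₁ hp₁q hstep
    exact ⟨p₂, hp₂, hp₂q, hpp₁.tail hp₁p₂⟩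

end

/-- the functor `Π` reflects homotopy: if `Π(f,λ)` and `Π(f',λ')` are
homotopic morphisms `(𝒮,l) → (𝒯,m)` of `A`-monomial posets, then `(f,λ)` and `(f',λ')`
are homotopic in `Simp^A`; in particular, if `Π(f,λ) ≤ Π(f',λ')` then
`(f,λ) − (f',λ')`. -/
theorem stmt18 {A S T : Type*} [Group A] [DecidableEq T]
    (𝒮 : Set (Finset S)) (𝒯 : Set (Finset T))
    (l : Finset S → Finset S → A) (m : Finset T → Finset T → A)
    (hl : IsMonomialSC 𝒮 l) (hm : IsMonomialSC 𝒯 m)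
    (f f' : S → T) (lam lam' : Finset S → A)
    (hp : IsSHom 𝒮 𝒯 l m (f, lam)) (hp' : IsSHom 𝒮 𝒯 l m (f', lam'))
    (h : PHomotopic (fun σ τ : {σ : Finset S // σ ∈ 𝒮} => l σ.1 τ.1)
      (fun σ τ : {τ : Finset T // τ ∈ 𝒯} => m σ.1 τ.1)
      ((fun σ : {σ : Finset S // σ ∈ 𝒮} =>
          (⟨σ.1.image f, hp.1 σ.1 σ.2⟩ : {τ : Finset T // τ ∈ 𝒯})),
        fun σ : {σ : Finset S // σ ∈ 𝒮} => lam σ.1)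
      ((fun σ : {σ : Finset S // σ ∈ 𝒮} =>
          (⟨σ.1.image f', hp'.1 σ.1 σ.2⟩ : {τ : Finset T // τ ∈ 𝒯})),
        fun σ : {σ : Finset S // σ ∈ 𝒮} => lam' σ.1)) :
    SHomotopic 𝒮 𝒯 l m (f, lam) (f', lam') ∧
      (PLe (fun σ τ : {τ : Finset T // τ ∈ 𝒯} => m σ.1 τ.1)
        ((fun σ : {σ : Finset S // σ ∈ 𝒮} =>
            (⟨σ.1.image f, hp.1 σ.1 σ.2⟩ : {τ : Finset T // τ ∈ 𝒯})),
          fun σ : {σ : Finset S // σ ∈ 𝒮} => lam σ.1)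
        ((fun σ : {σ : Finset S // σ ∈ 𝒮} =>
            (⟨σ.1.image f', hp'.1 σ.1 σ.2⟩ : {τ : Finset T // τ ∈ 𝒯})),
          fun σ : {σ : Finset S // σ ∈ 𝒮} => lam' σ.1) →
        SContig 𝒮 𝒯 m (f, lam) (f', lam')) := by
  have hpi := piLe_piMor (𝒮 := 𝒮) hm hp.1
  have hpi' := piLe_piMor (𝒮 := 𝒮) hm hp'.1
  refine ⟨?_, fun hle => PiLe.sContig hl.1 hm (fun σ => ⟨hle.1 σ, hle.2 σ⟩) hpi'⟩
  obtain ⟨p, hp₀, hpq', hhom⟩ := exists_sHomotopic_of_pHomotopic hl.1 hm hp hpi h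
  exact hhom.tail ⟨hp₀, hp', hpq'.sContig hl.1 hm hpi'⟩
end
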